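/- State-argument integral limit of the shape-derivative splitting: Let Ω ⊆ ℝ^d be a bounded open set with λ^d(∂Ω) = 0, V : ℝ^d → ℝ^d an admissible distortion, ũ : ℝ^d → ℝ of class C², and ψ : ℝ^d × ℝ → ℝ of class C¹. Then lim_{ε→0} (1/ε) ∫_{Ω_ε} [ψ(x, ũ(x)) − ψ(x, ũ(x + εV(x)))] · |det(I_d + ε DV(x))| dλ^d(x) = − ∫_Ω ∂_u ψ(x, ũ(x)) · ⟨∇ũ(x), V(x)⟩ dλ^d(x), where ∂_u ψ denotes the partial derivative of ψ with respect to its second (scalar) argument. -/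

import Mathlib

open Filter MeasureTheory RealInnerProductSpace Set Topology

/-! Pull `1 / ε` inside and apply dominated convergence to the integrands extended by zero
outside `Ω_ε`. For fixed `x` the integrand is minus the difference quotient at `0` of
`ε ↦ ψ (x, u (x + ε • V x))` times a Jacobian factor tending to `1`, and `x ∈ Ω_ε ↔ x ∈ Ω`
for small `ε` unless `x ∈ ∂Ω`, a null set. For `|ε| ≤ 1` every `Ω_ε` lies in one compact set,
on which the mean value inequality for the `C¹` map `(ε, x) ↦ ψ (x, u (x + ε • V x))` and the
continuity of the Jacobian bound the integrand uniformly. -/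

theorem Filter.Tendsto.eventually_mem_iff_of_notMem_frontier {α X : Type*} [TopologicalSpace X]
    {l : Filter α} {f : α → X} {s : Set X} {x : X} (hf : Tendsto f l (𝓝 x))
    (hx : x ∉ frontier s) : ∀ᶠ a in l, (f a ∈ s ↔ x ∈ s) := by
  by_cases hxs : x ∈ s
  · have hint : x ∈ interior s := (mem_interior_iff_notMem_frontier hxs).2 hx
    filter_upwards [hf.eventually_mem (isOpen_interior.mem_nhds hint)] with a ha
    exact iff_of_true (interior_subset ha) hxs
  · have hext : x ∈ (closure s)ᶜ := fun hcl => hx ⟨hcl, fun hint => hxs (interior_subset hint)⟩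
    filter_upwards [hf.eventually_mem (isClosed_closure.isOpen_compl.mem_nhds hext)] with a ha
    exact iff_of_false (fun has => ha (subset_closure has)) hxs

theorem tendsto_setIntegral_of_dominated_of_eventually_mem_iff {α E G : Type*}
    [MeasurableSpace E] {μ : Measure E} [NormedAddCommGroup G] [NormedSpace ℝ G]
    {l : Filter α} [l.IsCountablyGenerated] {S : α → Set E} {s K : Set E} {F : α → E → G}
    {f : E → G} {C : ℝ} (hS : ∀ᶠ a in l, MeasurableSet (S a)) (hs : MeasurableSet s)
    (hF : ∀ᶠ a in l, AEStronglyMeasurable (F a) μ) (hK : MeasurableSet K) (hμK : μ K ≠ ⊤)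
    (hSK : ∀ᶠ a in l, S a ⊆ K) (hFC : ∀ᶠ a in l, ∀ x ∈ S a, ‖F a x‖ ≤ C)
    (hSs : ∀ᵐ x ∂μ, ∀ᶠ a in l, (x ∈ S a ↔ x ∈ s))
    (hFf : ∀ x ∈ s, Tendsto (fun a => F a x) l (𝓝 (f x))) :
    Tendsto (fun a => ∫ x in S a, F a x ∂μ) l (𝓝 (∫ x in s, f x ∂μ)) := by
  rw [← integral_indicator hs]
  refine Tendsto.congr' ?_ (tendsto_integral_filter_of_dominated_convergence
    (F := fun a => (S a).indicator (F a)) (K.indicator fun _ => |C|) ?_ ?_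
    ((integrableOn_const hμK).integrable_indicator hK) ?_)
  · filter_upwards [hS] with a ha using integral_indicator ha
  · filter_upwards [hS, hF] with a ha hFa using hFa.indicator ha
  · filter_upwards [hSK, hFC] with a hSK hFC
    refine ae_of_all _ fun x => ?_
    by_cases hx : x ∈ S a
    · rw [indicator_of_mem hx, indicator_of_mem (hSK hx)]
      exact (hFC x hx).trans (le_abs_self C)
    · rw [indicator_of_notMem hx, norm_zero]
      exact indicator_nonneg (fun _ _ => abs_nonneg C) x
  · filter_upwards [hSs] with x hx
    by_cases hxs : x ∈ s
    · rw [indicator_of_mem hxs]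
      refine (hFf x hxs).congr' ?_
      filter_upwards [hx] with a ha
      rw [indicator_of_mem (ha.2 hxs)]
    · rw [indicator_of_notMem hxs]
      refine tendsto_const_nhds.congr' ?_
      filter_upwards [hx] with a ha
      rw [indicator_of_notMem (mt ha.1 hxs)]

theorem ContDiff.exists_norm_sub_le_mul_abs {E F : Type*} [NormedAddCommGroup E]
    [NormedSpace ℝ E] [NormedAddCommGroup F] [NormedSpace ℝ F] {G : ℝ × E → F}
    (hG : ContDiff ℝ 1 G) {K : Set E} (hK : IsCompact K) :
    ∃ C, ∀ ε ∈ Icc (-1 : ℝ) 1, ∀ x ∈ K, ‖G (ε, x) - G (0, x)‖ ≤ C * |ε| := by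
  obtain ⟨C, hC⟩ := (isCompact_Icc.prod hK).exists_bound_of_continuousOn
    (hG.continuous_fderiv one_ne_zero).continuousOn
  refine ⟨C, fun ε hε x hx => ?_⟩
  have hderiv (t : ℝ) : HasDerivAt (fun t => G (t, x)) (fderiv ℝ G (t, x) (1, 0)) t :=
    (hG.differentiable one_ne_zero _).hasFDerivAt.comp_hasDerivAt t
      ((hasDerivAt_id t).prodMk (hasDerivAt_const t x))
  have hbound (t : ℝ) (ht : t ∈ Icc (-1 : ℝ) 1) : ‖fderiv ℝ G (t, x) (1, 0)‖ ≤ C :=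
    calc ‖fderiv ℝ G (t, x) (1, 0)‖ ≤ ‖fderiv ℝ G (t, x)‖ * ‖((1 : ℝ), (0 : E))‖ :=
          (fderiv ℝ G (t, x)).le_opNorm _
      _ ≤ C := by simpa using hC (t, x) ⟨ht, hx⟩
  simpa using (convex_Icc (-1 : ℝ) 1).norm_image_sub_le_of_norm_hasDerivWithin_le
    (fun t _ => (hderiv t).hasDerivWithinAt) hbound (by norm_num : (0 : ℝ) ∈ Icc (-1) 1) hε

theorem Bornology.IsBounded.setOf_add_smul_mem {E : Type*} [SeminormedAddCommGroup E]
    [NormedSpace ℝ E] {Ω : Set E} (hΩ : IsBounded Ω) {V : E → E} {M : ℝ}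
    (hV : ∀ x, ‖V x‖ ≤ M) : IsBounded {y | ∃ ε ∈ Icc (-1 : ℝ) 1, y + ε • V y ∈ Ω} := by
  obtain ⟨R, hR⟩ := hΩ.subset_closedBall 0
  refine (Metric.isBounded_closedBall (x := 0) (r := R + M)).subset ?_
  rintro y ⟨ε, hε, hy⟩
  have hshift : ‖ε • V y‖ ≤ M := by
    rw [norm_smul]
    exact (mul_le_of_le_one_left (norm_nonneg _) (abs_le.2 hε)).trans (hV y)
  rw [mem_closedBall_zero_iff]
  calc ‖y‖ = ‖(y + ε • V y) - ε • V y‖ := by rw [add_sub_cancel_right]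
    _ ≤ ‖y + ε • V y‖ + ‖ε • V y‖ := norm_sub_le _ _
    _ ≤ R + M := add_le_add (mem_closedBall_zero_iff.1 (hR hy)) hshift

theorem tendsto_inv_mul_sub_mul {φ J : ℝ → ℝ} {m : ℝ} (hφ : HasDerivAt φ m 0)
    (hJ : ContinuousAt J 0) :
    Tendsto (fun ε => (1 / ε) * ((φ 0 - φ ε) * J ε)) (𝓝[≠] 0) (𝓝 (-m * J 0)) := by
  refine ((hasDerivAt_iff_tendsto_slope.1 hφ).neg.mul (hJ.mono_left nhdsWithin_le_nhds)).congr' ?_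
  filter_upwards [self_mem_nhdsWithin] with ε (hε : ε ≠ 0)
  rw [slope_def_field, sub_zero]
  field_simp
  ring

section StateArgument

variable {E : Type*} [NormedAddCommGroup E] {V : E → E} {u : E → ℝ} {ψ : E × ℝ → ℝ}

theorem hasDerivAt_state_comp_add_smul [InnerProductSpace ℝ E] [CompleteSpace E] {x v : E}
    (hu : DifferentiableAt ℝ u x) (hψ : DifferentiableAt ℝ ψ (x, u x)) :
    HasDerivAt (fun ε : ℝ => ψ (x, u (x + ε • v)))
      (deriv (fun w => ψ (x, w)) (u x) * ⟪gradient u x, v⟫) 0 := by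
  have hmove : HasDerivAt (fun ε : ℝ => x + ε • v) v 0 := by
    simpa using ((hasDerivAt_id (0 : ℝ)).smul_const v).const_add x
  have hline : HasDerivAt (fun ε : ℝ => u (x + ε • v)) ⟪gradient u x, v⟫ 0 :=
    hu.hasGradientAt.hasFDerivAt.comp_hasDerivAt_of_eq 0 hmove (by rw [zero_smul, add_zero])
  have hstate : DifferentiableAt ℝ (fun w => ψ (x, w)) (u x) :=
    hψ.comp (u x) ((differentiableAt_const x).prodMk differentiableAt_id)
  exact hstate.hasDerivAt.comp_of_eq 0 hline (by rw [zero_smul, add_zero])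

theorem tendsto_state_quotient [InnerProductSpace ℝ E] [CompleteSpace E] (x : E)
    (hu : DifferentiableAt ℝ u x) (hψ : DifferentiableAt ℝ ψ (x, u x)) :
    Tendsto (fun ε : ℝ => (1 / ε) * ((ψ (x, u x) - ψ (x, u (x + ε • V x))) *
        |(ContinuousLinearMap.id ℝ E + ε • fderiv ℝ V x).det|))
      (𝓝[≠] 0) (𝓝 (-(deriv (fun w => ψ (x, w)) (u x) * ⟪gradient u x, V x⟫))) := by
  have hJ : Continuous fun ε : ℝ => |(ContinuousLinearMap.id ℝ E + ε • fderiv ℝ V x).det| :=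
    (ContinuousLinearMap.continuous_det.comp (by fun_prop)).abs
  simpa [ContinuousLinearMap.det] using
    tendsto_inv_mul_sub_mul (hasDerivAt_state_comp_add_smul (v := V x) hu hψ) hJ.continuousAt

theorem exists_bound_state_quotient [NormedSpace ℝ E] (hV : ContDiff ℝ 1 V) (hu : ContDiff ℝ 1 u)
    (hψ : ContDiff ℝ 1 ψ) {K : Set E} (hK : IsCompact K) :
    ∃ C, ∀ ε ∈ Icc (-1 : ℝ) 1, ε ≠ 0 → ∀ x ∈ K,
      ‖(1 / ε) * ((ψ (x, u x) - ψ (x, u (x + ε • V x))) *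
        |(ContinuousLinearMap.id ℝ E + ε • fderiv ℝ V x).det|)‖ ≤ C := by
  obtain ⟨L, hL⟩ := ContDiff.exists_norm_sub_le_mul_abs
    (G := fun p : ℝ × E => ψ (p.2, u (p.2 + p.1 • V p.2))) (by fun_prop) hK
  obtain ⟨D, hD⟩ := (isCompact_Icc.prod hK).exists_bound_of_continuousOn
    (ContinuousLinearMap.continuous_det.comp (by fun_prop : Continuous fun p : ℝ × E =>
      ContinuousLinearMap.id ℝ E + p.1 • fderiv ℝ V p.2)).abs.continuousOn
  refine ⟨L * D, fun ε hε hε0 x hx => ?_⟩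
  have hdiff : |ψ (x, u x) - ψ (x, u (x + ε • V x))| / |ε| ≤ L := by
    rw [div_le_iff₀ (abs_pos.2 hε0), abs_sub_comm]
    simpa using hL ε hε x hx
  rw [norm_mul, norm_mul, norm_div, norm_one, ← mul_assoc, one_div_mul_eq_div]
  exact mul_le_mul hdiff (hD (ε, x) ⟨hε, hx⟩) (norm_nonneg _)
    ((div_nonneg (abs_nonneg _) (abs_nonneg _)).trans hdiff)

theorem continuous_state_quotient [NormedSpace ℝ E] (hV : ContDiff ℝ 1 V) (hu : Continuous u)
    (hψ : Continuous ψ) (ε : ℝ) :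
    Continuous fun x => (1 / ε) * ((ψ (x, u x) - ψ (x, u (x + ε • V x))) *
        |(ContinuousLinearMap.id ℝ E + ε • fderiv ℝ V x).det|) := by
  have hDV := hV.continuous_fderiv one_ne_zero
  have hJ : Continuous fun x => |(ContinuousLinearMap.id ℝ E + ε • fderiv ℝ V x).det| :=
    (ContinuousLinearMap.continuous_det.comp (by fun_prop)).abs
  fun_prop

end StateArgument

/-- State-argument integral limit of the shape-derivative splitting. -/
theorem state_argument_integral_limit
    {d : ℕ} (Ω : Set (EuclideanSpace ℝ (Fin d)))
    (hΩ_open : IsOpen Ω) (hΩ_bdd : Bornology.IsBounded Ω)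
    (hfrontier : volume (frontier Ω) = 0)
    (V : EuclideanSpace ℝ (Fin d) → EuclideanSpace ℝ (Fin d))
    (hV : ContDiff ℝ 2 V) (hVbdd : ∃ M : ℝ, ∀ x, ‖V x‖ ≤ M)
    (u : EuclideanSpace ℝ (Fin d) → ℝ) (hu : ContDiff ℝ 2 u)
    (ψ : EuclideanSpace ℝ (Fin d) × ℝ → ℝ) (hψ : ContDiff ℝ 1 ψ) :
    Tendsto (fun ε : ℝ =>
        (1 / ε) * ∫ x in {y | y + ε • V y ∈ Ω},
          (ψ (x, u x) - ψ (x, u (x + ε • V x))) *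
            |ContinuousLinearMap.det
              (ContinuousLinearMap.id ℝ (EuclideanSpace ℝ (Fin d)) + ε • fderiv ℝ V x)|)
      (nhdsWithin 0 {0}ᶜ)
      (nhds (- ∫ x in Ω, deriv (fun v : ℝ => ψ (x, v)) (u x) * ⟪gradient u x, V x⟫)) := by
  obtain ⟨M, hM⟩ := hVbdd
  have hV₁ : ContDiff ℝ 1 V := hV.of_le (by norm_num)
  have hu₁ : ContDiff ℝ 1 u := hu.of_le (by norm_num)
  set K := closure {y | ∃ ε ∈ Icc (-1 : ℝ) 1, y + ε • V y ∈ Ω}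
  have hK : IsCompact K := (hΩ_bdd.setOf_add_smul_mem hM).isCompact_closure
  obtain ⟨C, hC⟩ := exists_bound_state_quotient hV₁ hu₁ hψ hK
  have hsmall : ∀ᶠ ε in 𝓝[≠] (0 : ℝ), ε ∈ Icc (-1 : ℝ) 1 ∧ ε ≠ 0 :=
    .and (nhdsWithin_le_nhds (Icc_mem_nhds (by norm_num) (by norm_num))) self_mem_nhdsWithin
  have hshift (x) : Tendsto (fun ε : ℝ => x + ε • V x) (𝓝[≠] 0) (𝓝 x) :=
    (Continuous.tendsto' (by fun_prop) 0 x (by simp)).mono_left nhdsWithin_le_nhds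
  have hlim := tendsto_setIntegral_of_dominated_of_eventually_mem_iff (μ := volume)
    (S := fun ε => {y | y + ε • V y ∈ Ω})
    (.of_forall fun ε => (hΩ_open.preimage (by fun_prop)).measurableSet) hΩ_open.measurableSet
    (.of_forall fun ε =>
      (continuous_state_quotient hV₁ hu.continuous hψ.continuous ε).aestronglyMeasurable)
    isClosed_closure.measurableSet hK.measure_lt_top.ne
    (hsmall.mono fun ε hε y hy => subset_closure ⟨ε, hε.1, hy⟩)
    (hsmall.mono fun ε hε x hx => hC ε hε.1 hε.2 x (subset_closure ⟨ε, hε.1, hx⟩))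
    ((measure_eq_zero_iff_ae_notMem.1 hfrontier).mono fun x hx =>
      (hshift x).eventually_mem_iff_of_notMem_frontier hx)
    (fun x _ => tendsto_state_quotient x (hu₁.differentiable one_ne_zero x)
      (hψ.differentiable one_ne_zero _))
  simpa only [integral_const_mul, integral_neg] using hlim
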